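/- For any word ω ∈ {1,2,3,4}*, E(ω1) = E(ω2) = (1/72) E(ω) and E(ω3) = E(ω4) = (1/24) E(ω); consequently E(ω1,ω3) = E(ω2,ω4) > E(ω1,ω2) > E(ω3) = E(ω4) > E(ω1) = E(ω2) whenever E(ω) > 0. -/

import Mathlib

open MeasureTheory ProbabilityTheory
open scoped ENNReal

noncomputable section

abbrev E2 : Type := EuclideanSpace ℝ (Fin 2)

/-- The point (a,b) of the Euclidean plane. -/
def pt (a b : ℝ) : E2 := (WithLp.equiv 2 (Fin 2 → ℝ)).symm ![a, b]

/-- The four generating similarities S₁,…,S₄ (indexed 0,…,3) of the Sierpiński carpet. -/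
def S : Fin 4 → E2 → E2
  | 0 => fun x => pt (x 0 / 3) (x 1 / 3)
  | 1 => fun x => pt (x 0 / 3 + 2/3) (x 1 / 3)
  | 2 => fun x => pt (x 0 / 3) (x 1 / 3 + 2/3)
  | 3 => fun x => pt (x 0 / 3 + 2/3) (x 1 / 3 + 2/3)

/-- The self-affinity equation P = (1/8)P∘S₁⁻¹ + (1/8)P∘S₂⁻¹ + (3/8)P∘S₃⁻¹ + (3/8)P∘S₄⁻¹. -/
def carpetEq (P : Measure E2) : Prop :=
  P = (1/8 : ℝ≥0∞) • P.map (S 0) + (1/8 : ℝ≥0∞) • P.map (S 1)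
    + (3/8 : ℝ≥0∞) • P.map (S 2) + (3/8 : ℝ≥0∞) • P.map (S 3)

/-- The unit square [0,1]². -/
def unitSq : Set E2 := {x | ∀ i, x i ∈ Set.Icc (0:ℝ) 1}

/-- S_ω = S_{ω₁} ∘ ⋯ ∘ S_{ω_k} for a word ω. -/
def Sw (w : List (Fin 4)) : E2 → E2 := fun x => w.foldr S x

/-- The basic square J_ω = S_ω([0,1]²). -/
def Jw (w : List (Fin 4)) : Set E2 := Sw w '' unitSq

/-- The basic square J_i of the first level. -/
def Jset (i : Fin 4) : Set E2 := S i '' unitSq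

/-- The mass centroid (conditional expectation) of P on a set A. -/
def ctr (P : Measure E2) (A : Set E2) : E2 := (P A).toReal⁻¹ • ∫ x in A, x ∂P

/-- E(ω) : distortion error on J_ω about its centroid a(ω) = S_ω(1/2,3/4). -/
def Err (P : Measure E2) (w : List (Fin 4)) : ℝ :=
  ∫ x in Jw w, ‖x - Sw w (pt (1/2) (3/4))‖^2 ∂P

/-- E(ωi, ωj) : distortion error on J_{ωi} ∪ J_{ωj} about its centroid. -/
def Epair (P : Measure E2) (w : List (Fin 4)) (i j : Fin 4) : ℝ :=
  ∫ x in (Jw (w ++ [i]) ∪ Jw (w ++ [j])),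
    ‖x - ctr P (Jw (w ++ [i]) ∪ Jw (w ++ [j]))‖^2 ∂P

/-!
Self-similarity, together with the fact that each `S i` contracts the distance to the unit
square by `1/3`, forces `P` to live on the unit square, on which the first-level squares `J_i` are
disjoint. Hence `P` restricted to `J_ω` is `p_ω • P ∘ S_ω⁻¹`, where `p_ω` is the product of the
weights along `ω`. In particular `P` has mean `(1/2, 3/4)`, `J_ω` has mass `p_ω` and centroid
`a(ω) = S_ω(1/2, 3/4)`, and since `S_ω` scales distances by `3^{-|ω|}` we get
`E(ω) = q V` with `q = p_ω 9^{-|ω|}` and `V = E(∅) ≤ 13/16`; so `E(ωi) = (p_i/9) E(ω)`.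
For two children, splitting the error about the common centroid (Huygens) gives
`E(ωi, ωj) = E(ωi) + E(ωj) + (m_i m_j / (m_i + m_j)) ‖a(ωi) - a(ωj)‖²` with `m_i = p_{ωi}`, which is
`E(ω)/18 + q/24` for the pairs `{1,3}`, `{2,4}` and `E(ω)/36 + q/36` for `{1,2}`.
The inequalities then only use `E(ω) = q V` with `V < 2`.
-/

open Set Metric Filter
open scoped NNReal RealInnerProductSpace

theorem mul_norm_sub_centroid_sq_add {E : Type*} [NormedAddCommGroup E] [NormedSpace ℝ E]
    {p q : ℝ} (hpq : p + q ≠ 0) (a b : E) :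
    p * ‖a - (p + q)⁻¹ • (p • a + q • b)‖ ^ 2 + q * ‖b - (p + q)⁻¹ • (p • a + q • b)‖ ^ 2
      = p * q / (p + q) * ‖a - b‖ ^ 2 := by
  have ha : a - (p + q)⁻¹ • (p • a + q • b) = (q / (p + q)) • (a - b) := by
    rw [div_eq_inv_mul, mul_smul, eq_inv_smul_iff₀ hpq, smul_sub, smul_inv_smul₀ hpq]
    module
  have hb : b - (p + q)⁻¹ • (p • a + q • b) = (p / (p + q)) • (b - a) := by
    rw [div_eq_inv_mul, mul_smul, eq_inv_smul_iff₀ hpq, smul_sub, smul_inv_smul₀ hpq]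
    module
  rw [ha, hb, norm_smul, norm_smul, norm_sub_rev b, mul_pow, mul_pow, Real.norm_eq_abs,
    Real.norm_eq_abs, sq_abs, sq_abs]
  field_simp
  ring

section Huygens

variable {E : Type*} [NormedAddCommGroup E] [InnerProductSpace ℝ E] [CompleteSpace E]
  [MeasurableSpace E] {μ : Measure E}

theorem integral_norm_sub_sq_eq_add [IsFiniteMeasure μ] (hμ : MemLp id 2 μ) {a : E}
    (ha : ∫ x, x ∂μ = μ.real univ • a) (u : E) :
    ∫ x, ‖x - u‖ ^ 2 ∂μ = ∫ x, ‖x - a‖ ^ 2 ∂μ + μ.real univ * ‖a - u‖ ^ 2 := by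
  have hint : Integrable (fun x : E => x) μ := hμ.integrable one_le_two
  have hsq : Integrable (fun x => ‖x - a‖ ^ 2) μ :=
    (hμ.sub (memLp_const a)).integrable_norm_pow two_ne_zero
  have hinner : Integrable (fun x => 2 * ⟪a - u, x - a⟫) μ :=
    ((hint.sub (integrable_const a)).const_inner (a - u)).const_mul 2
  have hcross : ∫ x, 2 * ⟪a - u, x - a⟫ ∂μ = 0 := by
    rw [integral_const_mul, integral_inner (f := fun x => x - a) (hint.sub (integrable_const a)),
      integral_sub hint (integrable_const a), ha, integral_const, sub_self, inner_zero_right,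
      mul_zero]
  have hsplit (x : E) : ‖x - u‖ ^ 2 = ‖x - a‖ ^ 2 + 2 * ⟪a - u, x - a⟫ + ‖a - u‖ ^ 2 := by
    rw [← sub_add_sub_cancel x a u, norm_add_sq_real, real_inner_comm]
  rw [integral_congr_ae (Eventually.of_forall hsplit),
    integral_add (f := fun x => ‖x - a‖ ^ 2 + 2 * ⟪a - u, x - a⟫) (hsq.add hinner)
      (integrable_const _), integral_add hsq hinner, hcross, integral_const, smul_eq_mul, add_zero]

theorem setIntegral_union_norm_sub_centroid_sq [BorelSpace E] [IsFiniteMeasure μ]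
    (hμ : MemLp id 2 μ) {A B : Set E} (hAB : Disjoint A B) (hB : MeasurableSet B) {a b : E}
    (ha : ∫ x in A, x ∂μ = μ.real A • a) (hb : ∫ x in B, x ∂μ = μ.real B • b)
    (hmass : μ.real A + μ.real B ≠ 0) :
    ∫ x in A ∪ B, ‖x - (μ.real (A ∪ B))⁻¹ • ∫ y in A ∪ B, y ∂μ‖ ^ 2 ∂μ
      = ∫ x in A, ‖x - a‖ ^ 2 ∂μ + ∫ x in B, ‖x - b‖ ^ 2 ∂μ
        + μ.real A * μ.real B / (μ.real A + μ.real B) * ‖a - b‖ ^ 2 := by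
  have hint : Integrable (fun x : E => x) μ := hμ.integrable one_le_two
  have hc : (μ.real (A ∪ B))⁻¹ • ∫ y in A ∪ B, y ∂μ
      = (μ.real A + μ.real B)⁻¹ • (μ.real A • a + μ.real B • b) := by
    rw [measureReal_union hAB hB, setIntegral_union hAB hB hint.integrableOn hint.integrableOn,
      ha, hb]
  have hsq (c : E) : Integrable (fun x => ‖x - c‖ ^ 2) μ :=
    (hμ.sub (memLp_const c)).integrable_norm_pow two_ne_zero
  rw [hc, setIntegral_union hAB hB (hsq _).integrableOn (hsq _).integrableOn,
    integral_norm_sub_sq_eq_add (a := a) (hμ.restrict A) (by rwa [measureReal_restrict_apply_univ]),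
    integral_norm_sub_sq_eq_add (a := b) (hμ.restrict B) (by rwa [measureReal_restrict_apply_univ]),
    measureReal_restrict_apply_univ, measureReal_restrict_apply_univ,
    ← mul_norm_sub_centroid_sq_add hmass]
  ring

end Huygens

theorem measure_setOf_pos_eq_zero_of_tail_le {α : Type*} [MeasurableSpace α] {μ : Measure α}
    [IsFiniteMeasure μ] {d : α → ℝ} (hd : Measurable d) {c : ℝ} (hc : 1 < c)
    (h : ∀ s > 0, μ {x | s ≤ d x} ≤ μ {x | c * s ≤ d x}) : μ {x | 0 < d x} = 0 := by
  have htail : ∀ s > 0, μ {x | s ≤ d x} = 0 := by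
    intro s hs
    have hiter (n : ℕ) : μ {x | s ≤ d x} ≤ μ {x | c ^ n * s ≤ d x} := by
      induction n with
      | zero => simp
      | succ n ih =>
        refine ih.trans ((h _ (mul_pos (pow_pos (by linarith) n) hs)).trans_eq ?_)
        rw [pow_succ', mul_assoc]
    have hanti : Antitone fun n : ℕ => {x | c ^ n * s ≤ d x} := fun n m hnm x hx =>
      (mul_le_mul_of_nonneg_right (pow_le_pow_right₀ hc.le hnm) hs.le).trans hx
    have hempty : ⋂ n : ℕ, {x | c ^ n * s ≤ d x} = ∅ := by
      refine eq_empty_of_forall_notMem fun x hx => ?_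
      obtain ⟨n, hn⟩ := pow_unbounded_of_one_lt (d x / s) hc
      rw [div_lt_iff₀ hs] at hn
      exact hn.not_ge (mem_iInter.1 hx n)
    have hlim := tendsto_measure_iInter_atTop (μ := μ)
      (fun n => (measurableSet_le measurable_const hd).nullMeasurableSet) hanti
      ⟨0, measure_ne_top μ _⟩
    rw [hempty, measure_empty] at hlim
    exact le_antisymm (ge_of_tendsto' hlim hiter) zero_le
  have hcover : {x | 0 < d x} ⊆ ⋃ n : ℕ, {x | 1 / (n + 1 : ℝ) ≤ d x} := fun x hx => by
    obtain ⟨n, hn⟩ := exists_nat_one_div_lt (show 0 < d x from hx)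
    exact mem_iUnion.2 ⟨n, hn.le⟩
  exact measure_mono_null hcover (measure_iUnion_null fun n => htail _ Nat.one_div_pos_of_nat)

def weight : Fin 4 → ℝ≥0
  | 0 => 1/8
  | 1 => 1/8
  | 2 => 3/8
  | 3 => 3/8

def wordWeight (w : List (Fin 4)) : ℝ≥0 := (w.map weight).prod

lemma weight_pos (i : Fin 4) : 0 < weight i := by
  fin_cases i <;> simp [weight]

lemma sum_weight : ∑ i, weight i = 1 := by
  simp only [Fin.sum_univ_four, weight]
  norm_num

lemma wordWeight_pos (w : List (Fin 4)) : 0 < wordWeight w :=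
  List.prod_pos fun _ h => by
    obtain ⟨i, -, rfl⟩ := List.mem_map.1 h
    exact weight_pos i

lemma wordWeight_append_singleton (w : List (Fin 4)) (i : Fin 4) :
    wordWeight (w ++ [i]) = wordWeight w * weight i := by
  simp [wordWeight]

lemma pt_apply_zero (a b : ℝ) : pt a b 0 = a := rfl

lemma pt_apply_one (a b : ℝ) : pt a b 1 = b := rfl

lemma E2.norm_sq_eq (x : E2) : ‖x‖ ^ 2 = x 0 ^ 2 + x 1 ^ 2 := by
  simp [EuclideanSpace.norm_sq_eq, Fin.sum_univ_two]

lemma S_sub (i : Fin 4) (x y : E2) : S i x - S i y = (3 : ℝ)⁻¹ • (x - y) := by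
  fin_cases i <;> ext k <;> fin_cases k <;>
    simp only [S, PiLp.sub_apply, PiLp.smul_apply, smul_eq_mul, Fin.zero_eta, Fin.mk_one,
      pt_apply_zero, pt_apply_one] <;>
    ring

lemma Sw_cons (a : Fin 4) (w : List (Fin 4)) (x : E2) : Sw (a :: w) x = S a (Sw w x) := rfl

lemma Sw_append_singleton (w : List (Fin 4)) (i : Fin 4) (x : E2) :
    Sw (w ++ [i]) x = Sw w (S i x) := by
  simp [Sw]

lemma Sw_sub (w : List (Fin 4)) (x y : E2) :
    Sw w x - Sw w y = ((3 : ℝ) ^ w.length)⁻¹ • (x - y) := by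
  induction w with
  | nil => simp [Sw]
  | cons a w ih =>
    rw [Sw_cons, Sw_cons, S_sub, ih, smul_smul, List.length_cons, pow_succ', mul_inv]

lemma three_pow_sq (n : ℕ) : ((3 : ℝ) ^ n) ^ 2 = 9 ^ n := by
  rw [← pow_mul, mul_comm, pow_mul]
  norm_num

lemma norm_Sw_sub (w : List (Fin 4)) (x y : E2) :
    ‖Sw w x - Sw w y‖ = ‖x - y‖ / 3 ^ w.length := by
  rw [Sw_sub, norm_smul, norm_inv, norm_pow, RCLike.norm_ofNat, inv_mul_eq_div]

lemma Sw_eq_smul_add (w : List (Fin 4)) :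
    Sw w = fun x => ((3 : ℝ) ^ w.length)⁻¹ • x + Sw w 0 := by
  ext1 x
  rw [← sub_eq_iff_eq_add, Sw_sub, sub_zero]

lemma measurableEmbedding_Sw (w : List (Fin 4)) : MeasurableEmbedding (Sw w) := by
  rw [Sw_eq_smul_add]
  exact ((Homeomorph.smulOfNeZero ((3 : ℝ) ^ w.length)⁻¹ (by positivity)).trans
    (Homeomorph.addRight (Sw w 0))).measurableEmbedding

lemma measurableEmbedding_S (i : Fin 4) : MeasurableEmbedding (S i) := measurableEmbedding_Sw [i]

lemma integral_Sw {μ : Measure E2} [IsProbabilityMeasure μ] (hμ : Integrable (fun x => x) μ)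
    (w : List (Fin 4)) : ∫ x, Sw w x ∂μ = Sw w (∫ x, x ∂μ) := by
  have hSw (x : E2) : Sw w x = ((3 : ℝ) ^ w.length)⁻¹ • x + Sw w 0 :=
    congrFun (Sw_eq_smul_add w) x
  rw [integral_congr_ae (Eventually.of_forall hSw), hSw (∫ x, x ∂μ),
    integral_add (f := fun x => ((3 : ℝ) ^ w.length)⁻¹ • x) (hμ.smul _) (integrable_const _),
    integral_smul, integral_const, probReal_univ, one_smul]

lemma isClosed_unitSq : IsClosed unitSq := by
  simp only [unitSq, ofPred_forall]
  exact isClosed_iInter fun i => isClosed_Icc.preimage (by fun_prop)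

lemma unitSq_nonempty : unitSq.Nonempty := ⟨0, fun i => by simp⟩

lemma S_mapsTo_unitSq (i : Fin 4) : MapsTo (S i) unitSq unitSq := by
  intro x hx k
  have h0 := hx 0
  have h1 := hx 1
  simp only [mem_Icc] at h0 h1 ⊢
  fin_cases i <;> fin_cases k <;>
    simp only [S, Fin.zero_eta, Fin.mk_one, pt_apply_zero, pt_apply_one] <;>
    constructor <;> linarith

lemma Sw_mapsTo_unitSq (w : List (Fin 4)) : MapsTo (Sw w) unitSq unitSq := by
  induction w with
  | nil => exact fun x hx => hx
  | cons a w ih => exact (S_mapsTo_unitSq a).comp ih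

lemma Jw_subset_unitSq (w : List (Fin 4)) : Jw w ⊆ unitSq :=
  (Sw_mapsTo_unitSq w).image_subset

lemma measurableSet_Jw (w : List (Fin 4)) : MeasurableSet (Jw w) :=
  (measurableEmbedding_Sw w).measurableSet_image.2 isClosed_unitSq.measurableSet

lemma Jw_append_singleton (w : List (Fin 4)) (i : Fin 4) : Jw (w ++ [i]) = Sw w '' Jset i := by
  simp only [Jw, Jset, ← image_comp]
  exact image_congr fun x _ => Sw_append_singleton w i x

lemma Jset_disjoint {i j : Fin 4} (hij : i ≠ j) : Disjoint (Jset i) (Jset j) := by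
  rw [Set.disjoint_left]
  rintro _ ⟨x, hx, rfl⟩ ⟨y, hy, hxy⟩
  have h0 := congrArg (· 0) hxy
  have h1 := congrArg (· 1) hxy
  have hx0 := hx 0
  have hx1 := hx 1
  have hy0 := hy 0
  have hy1 := hy 1
  simp only [mem_Icc] at hx0 hx1 hy0 hy1
  fin_cases i <;> fin_cases j <;> simp only [S, pt_apply_zero, pt_apply_one] at h0 h1 <;>
    first | exact hij rfl | linarith

lemma infDist_S_le (i : Fin 4) (x : E2) : infDist (S i x) unitSq ≤ infDist x unitSq / 3 := by
  rw [le_div_iff₀ three_pos, mul_comm, le_infDist unitSq_nonempty]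
  intro y hy
  have h := infDist_le_dist_of_mem (x := S i x) (S_mapsTo_unitSq i hy)
  rw [dist_eq_norm, S_sub, norm_smul] at h
  rw [dist_eq_norm]
  norm_num at h
  linarith

namespace carpetEq

variable {P : Measure E2} (hP : carpetEq P)
include hP

lemma eq_sum : P = ∑ i, weight i • P.map (S i) := by
  conv_lhs => rw [hP]
  ext s
  simp [Fin.sum_univ_four, weight, ENNReal.coe_div]

lemma measure_eq_sum (A : Set E2) : P A = ∑ i, (weight i : ℝ≥0∞) * P (S i ⁻¹' A) := by
  conv_lhs => rw [hP.eq_sum]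
  rw [Measure.coe_finsetSum, Finset.sum_apply]
  exact Finset.sum_congr rfl fun i _ => by
    rw [Measure.smul_apply, (measurableEmbedding_S i).map_apply, ENNReal.smul_def, smul_eq_mul]

lemma measure_le_measure_of_preimage_subset {A A' : Set E2} (h : ∀ i, S i ⁻¹' A ⊆ A') :
    P A ≤ P A' :=
  calc P A = ∑ i, (weight i : ℝ≥0∞) * P (S i ⁻¹' A) := hP.measure_eq_sum A
    _ ≤ ∑ i, (weight i : ℝ≥0∞) * P A' := by gcongr with i; exact h i
    _ = P A' := by
      rw [← Finset.sum_mul, ← ENNReal.ofNNReal_finsetSum, sum_weight, ENNReal.coe_one, one_mul]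

lemma measure_compl_unitSq [IsFiniteMeasure P] : P unitSqᶜ = 0 := by
  have hcompl : unitSqᶜ = {x | 0 < infDist x unitSq} := by
    ext x
    exact isClosed_unitSq.notMem_iff_infDist_pos unitSq_nonempty
  rw [hcompl]
  refine measure_setOf_pos_eq_zero_of_tail_le (continuous_infDist_pt _).measurable
    (c := 3) (by norm_num) fun s _ => hP.measure_le_measure_of_preimage_subset fun i x hx => ?_
  have hSx : s ≤ infDist (S i x) unitSq := hx
  show 3 * s ≤ infDist x unitSq
  linarith [infDist_S_le i x]

lemma restrict_unitSq [IsFiniteMeasure P] : P.restrict unitSq = P :=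
  Measure.restrict_eq_self_of_ae_mem (ae_iff.2 hP.measure_compl_unitSq)

lemma restrict_image_S [IsFiniteMeasure P] (i : Fin 4) {B : Set E2} (hB : B ⊆ unitSq) :
    P.restrict (S i '' B) = weight i • (P.restrict B).map (S i) := by
  have hS := measurableEmbedding_S i
  ext C hC
  have hnull : ∀ j ≠ i, P (S j ⁻¹' (C ∩ S i '' B)) = 0 := fun j hji =>
    measure_mono_null (fun x hx hxU => (Jset_disjoint hji).ne_of_mem ⟨x, hxU, rfl⟩
      (image_mono hB hx.2) rfl) hP.measure_compl_unitSq
  rw [Measure.restrict_apply hC, hP.measure_eq_sum, Finset.sum_eq_single i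
      (fun j _ hji => by rw [hnull j hji, mul_zero]) (by simp),
    Measure.smul_apply, hS.map_apply, Measure.restrict_apply (hS.measurable hC), preimage_inter,
    hS.injective.preimage_image, ENNReal.smul_def, smul_eq_mul]

lemma restrict_Jw [IsFiniteMeasure P] (w : List (Fin 4)) :
    P.restrict (Jw w) = wordWeight w • P.map (Sw w) := by
  induction w with
  | nil =>
    simp only [Jw, show Sw [] = id from rfl, image_id, Measure.map_id, wordWeight, List.map_nil,
      List.prod_nil, one_smul, hP.restrict_unitSq]
  | cons a w ih =>
    have hJw : Jw (a :: w) = S a '' Jw w := by simp only [Jw, ← image_comp]; rfl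
    rw [hJw, hP.restrict_image_S a (Jw_subset_unitSq w), ih, Measure.map_smul,
      Measure.map_map (measurableEmbedding_S a).measurable (measurableEmbedding_Sw w).measurable,
      smul_smul]
    rfl

lemma setIntegral_Jw [IsFiniteMeasure P] {F : Type*} [NormedAddCommGroup F] [NormedSpace ℝ F]
    (w : List (Fin 4)) (g : E2 → F) :
    ∫ x in Jw w, g x ∂P = (wordWeight w : ℝ) • ∫ x, g (Sw w x) ∂P := by
  rw [hP.restrict_Jw, integral_smul_nnreal_measure, (measurableEmbedding_Sw w).integral_map,
    NNReal.smul_def]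

lemma measureReal_Jw [IsProbabilityMeasure P] (w : List (Fin 4)) :
    P.real (Jw w) = wordWeight w := by
  simpa using hP.setIntegral_Jw w fun _ => (1 : ℝ)

lemma memLp_id [IsFiniteMeasure P] : MemLp id 2 P := by
  refine MemLp.of_bound measurable_id.aestronglyMeasurable 2 ?_
  filter_upwards [ae_iff.2 hP.measure_compl_unitSq] with x hx
  have h0 := hx 0
  have h1 := hx 1
  simp only [mem_Icc] at h0 h1
  have hsq : ‖x‖ ^ 2 ≤ 2 := by rw [E2.norm_sq_eq]; nlinarith
  show ‖x‖ ≤ 2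
  nlinarith [norm_nonneg x]

lemma integral_id [IsProbabilityMeasure P] : ∫ x, x ∂P = pt (1/2) (3/4) := by
  have hint : Integrable (fun x : E2 => x) P := hP.memLp_id.integrable one_le_two
  have hmap (i : Fin 4) : Integrable (fun x : E2 => x) (weight i • P.map (S i)) := by
    rw [hP.eq_sum, integrable_finsetSum_measure] at hint
    exact hint i (Finset.mem_univ i)
  have hfix : ∫ x, x ∂P = ∑ i, (weight i : ℝ) • S i (∫ x, x ∂P) := by
    conv_lhs => rw [hP.eq_sum]
    rw [integral_finsetSum_measure fun i _ => hmap i]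
    refine Finset.sum_congr rfl fun i _ => ?_
    rw [integral_smul_nnreal_measure, (measurableEmbedding_S i).integral_map, NNReal.smul_def]
    exact congrArg _ (integral_Sw hint [i])
  have h0 := congrArg (· 0) hfix
  have h1 := congrArg (· 1) hfix
  simp only [Fin.sum_univ_four, PiLp.add_apply, PiLp.smul_apply, smul_eq_mul, weight, S,
    pt_apply_zero, pt_apply_one] at h0 h1
  norm_num at h0 h1
  ext k
  fin_cases k
  · rw [Fin.zero_eta, pt_apply_zero]; linarith
  · rw [Fin.mk_one, pt_apply_one]; linarith

lemma setIntegral_Jw_id [IsProbabilityMeasure P] (w : List (Fin 4)) :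
    ∫ x in Jw w, x ∂P = P.real (Jw w) • Sw w (pt (1/2) (3/4)) := by
  rw [hP.setIntegral_Jw, integral_Sw (hP.memLp_id.integrable one_le_two), hP.integral_id,
    hP.measureReal_Jw]

lemma Err_eq [IsFiniteMeasure P] (w : List (Fin 4)) :
    Err P w = wordWeight w / 9 ^ w.length * Err P [] := by
  simp only [Err, hP.setIntegral_Jw, norm_Sw_sub, div_pow, integral_div, smul_eq_mul,
    three_pow_sq]
  simp [wordWeight]
  ring

lemma Err_append_singleton [IsFiniteMeasure P] (w : List (Fin 4)) (i : Fin 4) :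
    Err P (w ++ [i]) = weight i / 9 * Err P w := by
  rw [hP.Err_eq, hP.Err_eq w, wordWeight_append_singleton, List.length_append,
    List.length_singleton, pow_succ]
  push_cast
  ring

lemma Err_nil_le [IsProbabilityMeasure P] : Err P [] ≤ 13 / 16 := by
  have hErr : Err P [] = ∫ x, ‖x - pt (1/2) (3/4)‖ ^ 2 ∂P := by
    simpa [Err, wordWeight, Sw] using hP.setIntegral_Jw [] fun x => ‖x - pt (1/2) (3/4)‖ ^ 2
  have hbound : ∀ᵐ x ∂P, ‖‖x - pt (1/2) (3/4)‖ ^ 2‖ ≤ 13 / 16 := by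
    filter_upwards [ae_iff.2 hP.measure_compl_unitSq] with x hx
    have h0 := hx 0
    have h1 := hx 1
    simp only [mem_Icc] at h0 h1
    rw [norm_pow, norm_norm, E2.norm_sq_eq, PiLp.sub_apply, PiLp.sub_apply, pt_apply_zero,
      pt_apply_one]
    nlinarith
  have h := norm_integral_le_of_norm_le_const hbound
  rw [probReal_univ, mul_one] at h
  exact hErr ▸ (le_abs_self _).trans h

lemma Epair_eq [IsProbabilityMeasure P] (w : List (Fin 4)) {i j : Fin 4} (hij : i ≠ j) :
    Epair P w i j = (weight i + weight j) / 9 * Err P w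
      + wordWeight w / 9 ^ w.length * (weight i * weight j / (weight i + weight j)
        * ‖S i (pt (1/2) (3/4)) - S j (pt (1/2) (3/4))‖ ^ 2) := by
  have hdisj : Disjoint (Jw (w ++ [i])) (Jw (w ++ [j])) := by
    rw [Jw_append_singleton, Jw_append_singleton]
    exact disjoint_image_of_injective (measurableEmbedding_Sw w).injective (Jset_disjoint hij)
  have hmass : P.real (Jw (w ++ [i])) + P.real (Jw (w ++ [j])) ≠ 0 := by
    rw [hP.measureReal_Jw, hP.measureReal_Jw, ← NNReal.coe_add]
    exact NNReal.coe_ne_zero.2 (add_pos (wordWeight_pos _) (wordWeight_pos _)).ne'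
  show ∫ x in _, ‖x - (P.real _)⁻¹ • ∫ y in _, y ∂P‖ ^ 2 ∂P = _
  rw [setIntegral_union_norm_sub_centroid_sq hP.memLp_id hdisj (measurableSet_Jw _)
    (hP.setIntegral_Jw_id _) (hP.setIntegral_Jw_id _) hmass]
  change Err P (w ++ [i]) + Err P (w ++ [j]) + _ = _
  rw [hP.Err_append_singleton, hP.Err_append_singleton, hP.measureReal_Jw, hP.measureReal_Jw,
    wordWeight_append_singleton, wordWeight_append_singleton, Sw_append_singleton,
    Sw_append_singleton, norm_Sw_sub, div_pow, three_pow_sq]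
  push_cast
  field_simp

end carpetEq

theorem Err_children (P : Measure E2) [IsProbabilityMeasure P] (hP : carpetEq P)
    (w : List (Fin 4)) :
    Err P (w ++ [0]) = (1/72) * Err P w
    ∧ Err P (w ++ [1]) = (1/72) * Err P w
    ∧ Err P (w ++ [2]) = (1/24) * Err P w
    ∧ Err P (w ++ [3]) = (1/24) * Err P w
    ∧ (0 < Err P w →
        Epair P w 0 2 = Epair P w 1 3
        ∧ Epair P w 1 3 > Epair P w 0 1
        ∧ Epair P w 0 1 > Err P (w ++ [2])
        ∧ Err P (w ++ [2]) = Err P (w ++ [3])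
        ∧ Err P (w ++ [3]) > Err P (w ++ [0])
        ∧ Err P (w ++ [0]) = Err P (w ++ [1])) := by
  -- `E(ω1,ω2) > E(ω3)` amounts to `E(ω) < 2 p_ω 9^{-|ω|}`.
  have hErr_le : Err P w ≤ wordWeight w / 9 ^ w.length * (13 / 16) := by
    rw [hP.Err_eq w]
    exact mul_le_mul_of_nonneg_left hP.Err_nil_le (by positivity)
  have h02 : Epair P w 0 2 = Err P w / 18 + wordWeight w / 9 ^ w.length / 24 := by
    rw [hP.Epair_eq w (by decide)]
    norm_num [weight, E2.norm_sq_eq, S, pt_apply_zero, pt_apply_one]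
    ring
  have h13 : Epair P w 1 3 = Err P w / 18 + wordWeight w / 9 ^ w.length / 24 := by
    rw [hP.Epair_eq w (by decide)]
    norm_num [weight, E2.norm_sq_eq, S, pt_apply_zero, pt_apply_one]
    ring
  have h01 : Epair P w 0 1 = Err P w / 36 + wordWeight w / 9 ^ w.length / 36 := by
    rw [hP.Epair_eq w (by decide)]
    norm_num [weight, E2.norm_sq_eq, S, pt_apply_zero, pt_apply_one]
    ring
  simp only [hP.Err_append_singleton, weight]
  norm_num
  exact fun hpos => ⟨h02.trans h13.symm, by linarith, by linarith, by linarith⟩
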